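/- Define the step kernel on ℝⁿ by k(x,y) = 1 if yᵢ ≥ xᵢ for all i, and 0 otherwise. Let g : ℝⁿ → ℝ be L-Lipschitz (in the sup norm) on a compact box X = [0,1]ⁿ, and ε > 0. Then there exist finitely many points x₁,…,x_N ∈ X and coefficients α₁,…,α_N ∈ ℝ such that |Σᵢ αᵢ k(xᵢ, x) − g(x)| ≤ ε for all x ∈ X. -/

import Mathlib

/-! Take the grid `{0, 1/m, …, 1}ⁿ` with `L/m ≤ ε`. Since the order matrix `[q ≤ p]` of a finite
poset is invertible (Möbius inversion), some combination of the steps `1_{· ≥ q}`, `q` in the grid,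
takes the value `g p` at every grid point `p`. At an arbitrary `x` in the box it only sees the grid
points below `x`, i.e. those below the rounded-down point `p = ⌊m x⌋ / m`, so it equals `g p`, and
`‖p - x‖ ≤ 1/m` gives the error bound `L/m ≤ ε`. -/

open Finset

section StepInterpolation

variable {I 𝕜 : Type*} [Field 𝕜] [Fintype I] [PartialOrder I] [OrderBot I]
  [LocallyFiniteOrder I] [DecidableEq I]

theorem exists_sum_Iic_eq (g : I → 𝕜) : ∃ α : I → 𝕜, ∀ a, ∑ k ∈ Iic a, α k = g a := by
  let T : (I → 𝕜) →ₗ[𝕜] I → 𝕜 := LinearMap.pi fun a => ∑ k ∈ Iic a, LinearMap.proj k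
  have hT : ∀ α a, T α a = ∑ k ∈ Iic a, α k := fun α a => by simp [T]
  have hinj : Function.Injective T := by
    rw [← LinearMap.ker_eq_bot, LinearMap.ker_eq_bot']
    intro α hα
    funext a
    rw [IncidenceAlgebra.moebius_inversion_bot α 0 (fun b => by rw [← hT, hα]) a]
    simp
  exact (LinearMap.injective_iff_surjective.1 hinj g).imp fun α hα a => by rw [← hT, hα]

theorem exists_sum_mul_indicator_Ici_eq {E : Type*} [Preorder E] (p : I → E) (g : I → 𝕜) :
    ∃ α : I → 𝕜, ∀ (a : I) (x : E), (∀ k, p k ≤ x ↔ k ≤ a) →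
      ∑ k, α k * (Set.Ici (p k)).indicator 1 x = g a := by
  obtain ⟨α, hα⟩ := exists_sum_Iic_eq g
  refine ⟨α, fun a x hx => ?_⟩
  rw [← hα, ← sum_subset (subset_univ (Iic a))]
  · refine sum_congr rfl fun k hk => ?_
    simp [(hx k).2 (mem_Iic.1 hk)]
  · intro k _ hk
    rw [Set.indicator_of_notMem, mul_zero]
    exact fun hle => hk (mem_Iic.2 ((hx k).1 hle))

end StepInterpolation

section Grid

noncomputable def floorFin (m : ℕ) (t : ℝ) : Fin (m + 1) :=
  ⟨min ⌊t * m⌋₊ m, Nat.lt_succ_of_le (min_le_right _ _)⟩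

noncomputable def gridPoint {ι : Type*} (m : ℕ) (k : ι → Fin (m + 1)) : ι → ℝ :=
  fun j => (k j : ℝ) / m

noncomputable def gridFloor {ι : Type*} (m : ℕ) (x : ι → ℝ) : ι → Fin (m + 1) :=
  fun j => floorFin m (x j)

variable {ι : Type*} {m : ℕ}

theorem floorFin_val {t : ℝ} (ht : t ≤ 1) : (floorFin m t : ℕ) = ⌊t * m⌋₊ := by
  refine min_eq_left ?_
  calc ⌊t * m⌋₊ ≤ ⌊(m : ℝ)⌋₊ := Nat.floor_le_floor (mul_le_of_le_one_left m.cast_nonneg ht)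
    _ = m := Nat.floor_natCast m

theorem div_le_iff_le_floorFin (hm : 0 < m) {t : ℝ} (ht : t ∈ Set.Icc (0 : ℝ) 1)
    (k : Fin (m + 1)) : (k : ℝ) / m ≤ t ↔ k ≤ floorFin m t := by
  rw [div_le_iff₀ (by exact_mod_cast hm), Fin.le_def, floorFin_val ht.2,
    Nat.le_floor_iff (mul_nonneg ht.1 m.cast_nonneg)]

theorem sub_floorFin_div_lt (hm : 0 < m) {t : ℝ} (ht : t ≤ 1) :
    t - (floorFin m t : ℝ) / m < 1 / m := by
  have hm' : (0 : ℝ) < m := by exact_mod_cast hm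
  rw [floorFin_val ht, sub_lt_iff_lt_add, ← add_div, lt_div_iff₀ hm', add_comm]
  exact Nat.lt_floor_add_one _

theorem gridPoint_mem_Icc (k : ι → Fin (m + 1)) : gridPoint m k ∈ Set.Icc 0 1 :=
  ⟨fun j => div_nonneg (k j : ℕ).cast_nonneg m.cast_nonneg,
    fun j => div_le_one_of_le₀ (Nat.cast_le.2 (k j).is_le) m.cast_nonneg⟩

theorem gridPoint_le_iff_le_gridFloor (hm : 0 < m) {x : ι → ℝ} (hx : x ∈ Set.Icc 0 1)
    (k : ι → Fin (m + 1)) : gridPoint m k ≤ x ↔ k ≤ gridFloor m x :=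
  forall_congr' fun j => div_le_iff_le_floorFin hm ⟨hx.1 j, hx.2 j⟩ (k j)

theorem norm_gridPoint_gridFloor_sub_le [Fintype ι] (hm : 0 < m) {x : ι → ℝ}
    (hx : x ∈ Set.Icc 0 1) : ‖gridPoint m (gridFloor m x) - x‖ ≤ 1 / m := by
  refine (pi_norm_le_iff_of_nonneg (by positivity)).2 fun j => ?_
  have hle : gridPoint m (gridFloor m x) j ≤ x j :=
    (gridPoint_le_iff_le_gridFloor hm hx _).2 le_rfl j
  rw [Pi.sub_apply, Real.norm_eq_abs, abs_sub_comm, abs_of_nonneg (sub_nonneg.2 hle)]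
  exact (sub_floorFin_div_lt hm (hx.2 j)).le

end Grid

/-- The step kernel `k(x',x) = 1_{x ≥ x'}` (componentwise) can uniformly approximate,
to accuracy `ε`, any `L`-Lipschitz (sup norm) function on the box `[0,1]ⁿ` by a finite
linear combination `Σᵢ αᵢ k(xᵢ, ·)`. -/
theorem step_kernel_uniform_approximation {n : ℕ} (g : (Fin n → ℝ) → ℝ)
    (L ε : ℝ) (hL : 0 < L) (hε : 0 < ε)
    (hLip : ∀ x ∈ Set.Icc (0 : Fin n → ℝ) 1, ∀ y ∈ Set.Icc (0 : Fin n → ℝ) 1,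
      |g x - g y| ≤ L * ‖x - y‖) :
    ∃ (N : ℕ) (pts : Fin N → (Fin n → ℝ)) (α : Fin N → ℝ),
      (∀ i, pts i ∈ Set.Icc (0 : Fin n → ℝ) 1) ∧
      ∀ x ∈ Set.Icc (0 : Fin n → ℝ) 1,
        |(∑ i, α i * ({y : Fin n → ℝ | ∀ j, pts i j ≤ y j}.indicator
            (fun _ => (1 : ℝ)) x)) - g x| ≤ ε := by
  obtain ⟨m, hm, hmL⟩ : ∃ m : ℕ, 0 < m ∧ L * (1 / m) ≤ ε := by
    have hm : 0 < ⌈L / ε⌉₊ := Nat.ceil_pos.2 (div_pos hL hε)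
    refine ⟨_, hm, ?_⟩
    rw [mul_one_div, div_le_iff₀ (by exact_mod_cast hm), ← div_le_iff₀' hε]
    exact Nat.le_ceil _
  obtain ⟨α, hα⟩ := exists_sum_mul_indicator_Ici_eq (gridPoint m) (g ∘ gridPoint m)
  let e := (Fintype.equivFin (Fin n → Fin (m + 1))).symm
  refine ⟨_, gridPoint m ∘ e, α ∘ e, fun i => gridPoint_mem_Icc _, fun x hx => ?_⟩
  have hsum : ∑ i, (α ∘ e) i * {y | ∀ j, (gridPoint m ∘ e) i j ≤ y j}.indicator (fun _ => 1) x =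
      g (gridPoint m (gridFloor m x)) :=
    (Fintype.sum_equiv e _ _ fun _ => rfl).trans
      (hα _ x (gridPoint_le_iff_le_gridFloor hm hx))
  rw [hsum]
  calc |g (gridPoint m (gridFloor m x)) - g x|
      ≤ L * ‖gridPoint m (gridFloor m x) - x‖ := hLip _ (gridPoint_mem_Icc _) _ hx
    _ ≤ L * (1 / m) := by gcongr; exact norm_gridPoint_gridFloor_sub_le hm hx
    _ ≤ ε := hmL
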